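/- arXiv:2107.07460 — 5 statements merged into one kernel-verified Lean document; each statement's English description precedes it below -/
import Mathlib

section
/- Let α : ℝ → ℝ be a locally Lipschitz class K function, i.e., α is strictly increasing with α(0) = 0. Let u : ℝ → ℝ be differentiable on [0,∞) and satisfy u'(t) ≥ −α(u(t)) for all t ≥ 0. If u(0) ≥ 0, then u(t) ≥ 0 for all t ≥ 0. -/
/-- Scalar comparison lemma underlying the CBF forward-invariance theorem
(Theorem 1 with relative degree m = 1): if `α` is a locally Lipschitz class K
function (strictly increasing with `α 0 = 0`), `u` is differentiable on `[0, ∞)`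
with `u' t ≥ -α (u t)` there, and `u 0 ≥ 0`, then `u t ≥ 0` for all `t ≥ 0`. -/
theorem cbf_scalar_comparison
    (α : ℝ → ℝ) (hα_lip : LocallyLipschitz α) (hα_mono : StrictMono α)
    (hα_zero : α 0 = 0)
    (u : ℝ → ℝ)
    (hu_diff : ∀ t : ℝ, 0 ≤ t → DifferentiableAt ℝ u t)
    (hu_ineq : ∀ t : ℝ, 0 ≤ t → deriv u t ≥ -α (u t))
    (hu0 : u 0 ≥ 0) :
    ∀ t : ℝ, 0 ≤ t → u t ≥ 0 := by
  intro t₀ ht₀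
  by_contra hneg
  push_neg at hneg
  -- set where u is nonnegative on [0, t₀]
  set S : Set ℝ := Set.Icc 0 t₀ ∩ u ⁻¹' Set.Ici 0 with hS
  have hucont : ContinuousOn u (Set.Icc 0 t₀) := fun x hx =>
    ((hu_diff x hx.1).continuousAt).continuousWithinAt
  have hSclosed : IsClosed S :=
    hucont.preimage_isClosed_of_isClosed isClosed_Icc isClosed_Ici
  have hSne : S.Nonempty := ⟨0, ⟨le_refl 0, ht₀⟩, hu0⟩
  have hSbdd : BddAbove S := ⟨t₀, fun x hx => hx.1.2⟩
  have hmem : sSup S ∈ S := hSclosed.csSup_mem hSne hSbdd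
  obtain ⟨hsIcc, hsu⟩ := hmem
  have hsu' : (0:ℝ) ≤ u (sSup S) := hsu
  have hst : sSup S < t₀ := lt_of_le_of_ne hsIcc.2 (fun h => absurd hsu' (by rw [h]; exact not_le.mpr hneg))
  -- on (sSup S, t₀], u < 0
  have hult : ∀ x ∈ Set.Ioc (sSup S) t₀, u x < 0 := by
    intro x hx
    by_contra h
    push_neg at h
    have hxS : x ∈ S := ⟨⟨le_trans hsIcc.1 hx.1.le, hx.2⟩, h⟩
    exact absurd (le_csSup hSbdd hxS) (not_le.mpr hx.1)
  -- u strictly increasing on [sSup S, t₀]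
  have hmono : StrictMonoOn u (Set.Icc (sSup S) t₀) := by
    apply strictMonoOn_of_deriv_pos (convex_Icc (sSup S) t₀)
    · exact hucont.mono (Set.Icc_subset_Icc hsIcc.1 le_rfl)
    · intro x hx
      rw [interior_Icc] at hx
      have hx0 : (0:ℝ) ≤ x := le_trans hsIcc.1 hx.1.le
      have hux : u x < 0 := hult x ⟨hx.1, hx.2.le⟩
      have : α (u x) < 0 := hα_zero ▸ hα_mono hux
      linarith [hu_ineq x hx0]
  have := hmono (Set.left_mem_Icc.mpr hst.le) (Set.right_mem_Icc.mpr hst.le) hst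
  linarith
end

section
/- Let m ≥ 1 and let α₁,…,α_m : ℝ → ℝ be locally Lipschitz class K functions (strictly increasing with αᵢ(0) = 0). Let ψ₀ : ℝ → ℝ be a function such that the functions defined recursively by ψᵢ(t) = ψᵢ₋₁'(t) + αᵢ(ψᵢ₋₁(t)) for i = 1,…,m−1 are all differentiable on [0,∞), and suppose ψ_{m−1}'(t) + α_m(ψ_{m−1}(t)) ≥ 0 for all t ≥ 0. If ψᵢ(0) ≥ 0 for every i = 0,…,m−1, then ψᵢ(t) ≥ 0 for all t ≥ 0 and every i = 0,…,m−1; in particular ψ₀(t) ≥ 0 for all t ≥ 0. -/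
lemma hocbf_core (f : ℝ → ℝ)
    (hd : ∀ t : ℝ, 0 ≤ t → DifferentiableAt ℝ f t)
    (h0 : 0 ≤ f 0)
    (h : ∀ t : ℝ, 0 ≤ t → f t < 0 → 0 ≤ deriv f t) :
    ∀ t : ℝ, 0 ≤ t → 0 ≤ f t := by
  intro t₁ ht₁
  by_contra hneg
  push_neg at hneg
  set S : Set ℝ := {u | u ∈ Set.Icc 0 t₁ ∧ 0 ≤ f u} with hS
  have h0S : (0:ℝ) ∈ S := ⟨⟨le_refl 0, ht₁⟩, h0⟩
  have hSne : S.Nonempty := ⟨0, h0S⟩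
  have hbdd : BddAbove S := ⟨t₁, fun u hu => hu.1.2⟩
  set s := sSup S with hs
  have hs0 : 0 ≤ s := le_csSup hbdd h0S
  have hst : s ≤ t₁ := csSup_le hSne fun u hu => hu.1.2
  have hscl : s ∈ closure S := csSup_mem_closure hSne hbdd
  have hfs : 0 ≤ f s := by
    have hc : ContinuousWithinAt f S s := (hd s hs0).continuousAt.continuousWithinAt
    have hmt : Set.MapsTo f S (Set.Ici 0) := fun u hu => hu.2
    have := hc.mem_closure hscl hmt
    rwa [closure_Ici] at this
  have hslt : s < t₁ := lt_of_le_of_ne hst (by intro he; rw [he] at hfs; exact absurd hfs (not_le.mpr hneg))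
  have hfneg : ∀ u, s < u → u ≤ t₁ → f u < 0 := by
    intro u hsu hu
    by_contra hfu
    push_neg at hfu
    exact absurd (le_csSup hbdd ⟨⟨hs0.trans hsu.le, hu⟩, hfu⟩) (not_le.mpr hsu)
  have hmono : MonotoneOn f (Set.Icc s t₁) := by
    apply monotoneOn_of_deriv_nonneg (convex_Icc s t₁)
    · exact fun u hu => ((hd u (hs0.trans hu.1)).continuousAt).continuousWithinAt
    · intro u hu
      rw [interior_Icc] at hu
      exact ((hd u (hs0.trans hu.1.le)).differentiableWithinAt)
    · intro u hu
      rw [interior_Icc] at hu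
      exact h u (hs0.trans hu.1.le) (hfneg u hu.1 hu.2.le)
  have := hmono ⟨le_refl s, hst⟩ ⟨hst, le_refl t₁⟩ hst
  linarith


/-- High Order Control Barrier Function theorem (Theorem 1 of the paper), stated
along a single trajectory.  `ψ 0` is the barrier function evaluated along the
trajectory, `α i` (for `i : Fin m`, representing `α_{i+1}`) are locally Lipschitz
class K functions, the recursion `ψ i = ψ (i-1)' + α_i (ψ (i-1))` holds for
`i = 1, …, m-1`, and the HOCBF constraint `ψ_{m-1}' + α_m (ψ_{m-1}) ≥ 0` holds for
all `t ≥ 0`.  If all `ψ i` start nonnegative, they stay nonnegative. -/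
theorem hocbf_forward_invariance
    (m : ℕ) (hm : 1 ≤ m)
    (α : Fin m → ℝ → ℝ)
    (hα_lip : ∀ i, LocallyLipschitz (α i))
    (hα_mono : ∀ i, StrictMono (α i))
    (hα_zero : ∀ i, α i 0 = 0)
    (ψ : ℕ → ℝ → ℝ)
    (hψ_diff : ∀ i < m, ∀ t : ℝ, 0 ≤ t → DifferentiableAt ℝ (ψ i) t)
    (hψ_rec : ∀ i : ℕ, (hi1 : 1 ≤ i) → (hi2 : i ≤ m - 1) → ∀ t : ℝ,
      ψ i t = deriv (ψ (i - 1)) t + α ⟨i - 1, by omega⟩ (ψ (i - 1) t))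
    (hconstraint : ∀ t : ℝ, 0 ≤ t →
      deriv (ψ (m - 1)) t + α ⟨m - 1, by omega⟩ (ψ (m - 1) t) ≥ 0)
    (hinit : ∀ i < m, ψ i 0 ≥ 0) :
    ∀ i < m, ∀ t : ℝ, 0 ≤ t → ψ i t ≥ 0 := by
  -- key single-step fact
  have key : ∀ j, ∀ hj : j < m, (∀ t : ℝ, 0 ≤ t →
      0 ≤ deriv (ψ j) t + α ⟨j, hj⟩ (ψ j t)) → ∀ t : ℝ, 0 ≤ t → 0 ≤ ψ j t := by
    intro j hj hcon
    apply hocbf_core (ψ j) (hψ_diff j hj) (hinit j hj)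
    intro t ht hneg
    have hαneg : α ⟨j, hj⟩ (ψ j t) < 0 := by
      have := hα_mono ⟨j, hj⟩ hneg
      rwa [hα_zero ⟨j, hj⟩] at this
    have := hcon t ht
    linarith
  -- downward induction
  have main : ∀ k ≤ m - 1, ∀ t : ℝ, 0 ≤ t → 0 ≤ ψ (m - 1 - k) t := by
    intro k
    induction k with
    | zero =>
      intro _ t ht
      simp only [Nat.sub_zero]
      exact key (m - 1) (by omega) (fun u hu => hconstraint u hu) t ht
    | succ n ih =>
      intro hn t ht
      have hrec := hψ_rec (m - 1 - n) (by omega) (by omega)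
      have hprev := ih (by omega)
      have hj : m - 1 - (n + 1) = (m - 1 - n) - 1 := by omega
      rw [hj]
      refine key ((m - 1 - n) - 1) (by omega) ?_ t ht
      intro u hu
      have h1 := hprev u hu
      rw [hrec u] at h1
      convert h1 using 3
  intro i hi t ht
  have : i = m - 1 - (m - 1 - i) := by omega
  rw [this]
  exact main (m - 1 - i) (by omega) t ht
end

section
/- Let F : ℝⁿ → ℝⁿ be locally Lipschitz, let b : ℝⁿ → ℝ be continuously differentiable, and let α : ℝ → ℝ be a locally Lipschitz class K function (strictly increasing with α(0) = 0). Suppose ⟨∇b(x), F(x)⟩ + α(b(x)) ≥ 0 for all x ∈ ℝⁿ. Then the set C = {x ∈ ℝⁿ : b(x) ≥ 0} is forward invariant for ẋ = F(x): for every solution x : [0,T] → ℝⁿ of ẋ(t) = F(x(t)) with b(x(0)) ≥ 0, one has b(x(t)) ≥ 0 for all t ∈ [0,T]. -/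
/-!
Along a solution, `h t = b (x t)` has derivative `⟪∇b, F⟫ ≥ -α (h t)`, which is nonnegative
wherever `h` is negative because `α y < α 0 = 0` for `y < 0`. A continuous function that
cannot decrease while it is negative never leaves `[0, ∞)`; this is proved by fencing `-h`
below the lines `ε (t - a + 1)` and letting `ε → 0`.
-/

open Set

theorem HasGradientAt.comp_hasDerivAt {E : Type*} [NormedAddCommGroup E] [InnerProductSpace ℝ E]
    [CompleteSpace E] {f : E → ℝ} {f' : E} {g : ℝ → E} {g' : E} {t : ℝ}
    (hf : HasGradientAt f f' (g t)) (hg : HasDerivAt g g' t) :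
    HasDerivAt (f ∘ g) (inner ℝ f' g') t := by
  simpa using hf.hasFDerivAt.comp_hasDerivAt t hg

theorem nonneg_of_deriv_right_nonneg_of_neg {h h' : ℝ → ℝ} {a b : ℝ}
    (hh : ContinuousOn h (Icc a b))
    (hh' : ∀ t ∈ Ico a b, HasDerivWithinAt h (h' t) (Ici t) t)
    (ha : 0 ≤ h a) (hneg : ∀ t ∈ Ico a b, h t < 0 → 0 ≤ h' t) :
    ∀ ⦃t⦄, t ∈ Icc a b → 0 ≤ h t := by
  intro t ht
  have fence : ∀ ε > 0, -h t ≤ ε * (t - a + 1) := fun ε hε =>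
    image_le_of_deriv_right_lt_deriv_boundary (f := fun s => -h s)
      (B := fun s => ε * (s - a + 1)) hh.neg (fun s hs => (hh' s hs).neg)
      (by simp only [sub_self, zero_add, mul_one]; linarith)
      (fun s => (((hasDerivAt_id s).sub_const a).add_const 1).const_mul ε)
      (fun s hs heq => by
        have hfence_pos : 0 < ε * (s - a + 1) := mul_pos hε (by linarith [hs.1])
        have := hneg s hs (by linarith)
        simp only [mul_one]
        linarith) ht
  have hlen : 0 < t - a + 1 := by linarith [ht.1]
  refine neg_nonpos.mp (le_of_forall_pos_le_add fun ε hε => ?_)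
  simpa [div_mul_cancel₀ ε hlen.ne'] using fence (ε / (t - a + 1)) (div_pos hε hlen)

theorem cbf_set_forward_invariance_general
    (n : ℕ)
    (F : EuclideanSpace ℝ (Fin n) → EuclideanSpace ℝ (Fin n))
    (b : EuclideanSpace ℝ (Fin n) → ℝ) (hb : ContDiff ℝ 1 b)
    (α : ℝ → ℝ) (hα_mono : StrictMono α)
    (hα_zero : α 0 = 0)
    (hcbf : ∀ x : EuclideanSpace ℝ (Fin n),
      inner ℝ (gradient b x) (F x) + α (b x) ≥ (0 : ℝ))
    (T : ℝ) (x : ℝ → EuclideanSpace ℝ (Fin n))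
    (hsol : ∀ t ∈ Set.Icc (0 : ℝ) T, HasDerivAt x (F (x t)) t)
    (h0 : b (x 0) ≥ 0) :
    ∀ t ∈ Set.Icc (0 : ℝ) T, b (x t) ≥ 0 := by
  have hderiv :
      ∀ t ∈ Icc 0 T, HasDerivAt (b ∘ x) (inner ℝ (gradient b (x t)) (F (x t))) t := fun t ht =>
    (hb.differentiable one_ne_zero (x t)).hasGradientAt.comp_hasDerivAt (hsol t ht)
  refine nonneg_of_deriv_right_nonneg_of_neg
    (fun t ht => (hderiv t ht).continuousAt.continuousWithinAt)
    (fun t ht => (hderiv t (Ico_subset_Icc_self ht)).hasDerivWithinAt) h0 (fun t _ hneg => ?_)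
  have : α (b (x t)) < 0 := hα_zero ▸ hα_mono hneg
  linarith [hcbf (x t)]

/-- Relative-degree-one Control Barrier Function theorem (classical CBF case of
Theorem 1 of the paper), for the closed-loop vector field `F`.  If
`⟨∇b(x), F(x)⟩ + α(b(x)) ≥ 0` everywhere, where `α` is a locally Lipschitz class K
function, then the set `C = {x | b x ≥ 0}` is forward invariant: along every
solution of `ẋ = F(x)` on `[0, T]` starting with `b (x 0) ≥ 0` we have
`b (x t) ≥ 0` for all `t ∈ [0, T]`. -/
theorem cbf_set_forward_invariance
    (n : ℕ)
    (F : EuclideanSpace ℝ (Fin n) → EuclideanSpace ℝ (Fin n))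
    (hF : LocallyLipschitz F)
    (b : EuclideanSpace ℝ (Fin n) → ℝ) (hb : ContDiff ℝ 1 b)
    (α : ℝ → ℝ) (hα_lip : LocallyLipschitz α) (hα_mono : StrictMono α)
    (hα_zero : α 0 = 0)
    (hcbf : ∀ x : EuclideanSpace ℝ (Fin n),
      inner ℝ (gradient b x) (F x) + α (b x) ≥ (0 : ℝ))
    (T : ℝ) (x : ℝ → EuclideanSpace ℝ (Fin n))
    (hsol : ∀ t ∈ Set.Icc (0 : ℝ) T, HasDerivAt x (F (x t)) t)
    (h0 : b (x 0) ≥ 0) :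
    ∀ t ∈ Set.Icc (0 : ℝ) T, b (x t) ≥ 0 :=
  cbf_set_forward_invariance_general n F b hb α hα_mono hα_zero hcbf T x hsol h0
end

section
/- Let L > 0, W > 0 and let z ≥ 1 be a natural number. Define the disk centers c_j = ((2j−1)·L/(2z), 0) for j = 1,…,z and the radius r = √((W/2)² + (L/(2z))²). Then the rectangle [0, L] × [−W/2, W/2] ⊆ ℝ² is contained in ⋃_{j=1}^{z} closedBall(c_j, r). -/
open Metric

/-- The rectangle `[0, L] × [-W/2, W/2]` (a vehicle clearance region of length
`L` and width `W` with centerline on the x-axis) is fully covered by the `z`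
disks of common radius `r = √((W/2)² + (L/(2z))²)` whose centers
`c_j = ((2j-1)·L/(2z), 0)`, `j = 1, …, z`, are equally spaced on the centerline
(equations (9) and (19) of the paper). -/
theorem rectangle_disk_coverage
    (L W : ℝ) (hL : 0 < L) (hW : 0 < W) (z : ℕ) (hz : 1 ≤ z) :
    {p : EuclideanSpace ℝ (Fin 2) |
        p 0 ∈ Set.Icc (0 : ℝ) L ∧ p 1 ∈ Set.Icc (-(W / 2)) (W / 2)} ⊆
      ⋃ j : Fin z,
        closedBall
          ((WithLp.equiv 2 (Fin 2 → ℝ)).symm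
            ![(2 * (j : ℝ) + 1) * L / (2 * z), 0])
          (Real.sqrt ((W / 2) ^ 2 + (L / (2 * z)) ^ 2)) := by
  intro p hp
  obtain ⟨⟨hx0, hxL⟩, hy1, hy2⟩ := hp
  set x := p 0 with hxdef
  set y := p 1 with hydef
  have hzR : (0:ℝ) < z := by exact_mod_cast Nat.lt_of_lt_of_le Nat.zero_lt_one hz
  have hzne : (z:ℝ) ≠ 0 := ne_of_gt hzR
  set j : ℕ := min (⌊x * z / L⌋₊) (z - 1) with hjdef
  have hjz : j < z := lt_of_le_of_lt (min_le_right _ _) (Nat.sub_lt (Nat.lt_of_lt_of_le Nat.zero_lt_one hz) Nat.one_pos)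
  refine Set.mem_iUnion.mpr ⟨⟨j, hjz⟩, ?_⟩
  rw [mem_closedBall]
  -- bounds on x
  have hlow : (j:ℝ) * L / z ≤ x := by
    have h1 : (j:ℝ) ≤ x * z / L := by
      have : (j:ℝ) ≤ (⌊x * z / L⌋₊ : ℝ) := by
        exact_mod_cast min_le_left _ _
      have h2 : (⌊x * z / L⌋₊ : ℝ) ≤ x * z / L :=
        Nat.floor_le (by positivity)
      linarith
    rw [le_div_iff₀ hL] at h1
    rw [div_le_iff₀ hzR]
    linarith
  have hhigh : x ≤ ((j:ℝ) + 1) * L / z := by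
    rcases le_or_gt (⌊x * z / L⌋₊) (z - 1) with h | h
    · have hje : j = ⌊x * z / L⌋₊ := min_eq_left h
      have h1 : x * z / L < (⌊x * z / L⌋₊ : ℝ) + 1 := Nat.lt_floor_add_one _
      rw [div_lt_iff₀ hL] at h1
      rw [le_div_iff₀ hzR]
      rw [hje]
      nlinarith
    · have hje : j = z - 1 := min_eq_right (le_of_lt h)
      have hjr : (j:ℝ) + 1 = z := by
        rw [hje]
        have : z - 1 + 1 = z := Nat.succ_pred_eq_of_pos (Nat.lt_of_lt_of_le Nat.zero_lt_one hz)
        exact_mod_cast congrArg (Nat.cast : ℕ → ℝ) this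
      rw [hjr, mul_comm, mul_div_assoc, div_self hzne, mul_one]
      exact hxL
  -- compute distance
  have hdist : dist p ((WithLp.equiv 2 (Fin 2 → ℝ)).symm
      ![(2 * ((⟨j, hjz⟩ : Fin z) : ℝ) + 1) * L / (2 * z), 0]) =
      Real.sqrt ((x - (2 * (j:ℝ) + 1) * L / (2 * z)) ^ 2 + y ^ 2) := by
    rw [EuclideanSpace.dist_eq, Fin.sum_univ_two]
    norm_num [Real.dist_eq, sq_abs, hxdef, hydef]
  rw [hdist]
  apply Real.sqrt_le_sqrt
  have hcl : (2 * (j:ℝ) + 1) * L / (2 * z) - L / (2 * z) = (j:ℝ) * L / z := by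
    field_simp; ring
  have hcr : (2 * (j:ℝ) + 1) * L / (2 * z) + L / (2 * z) = ((j:ℝ) + 1) * L / z := by
    field_simp; ring
  have h1 : -(L / (2 * z)) ≤ x - (2 * (j:ℝ) + 1) * L / (2 * z) := by linarith
  have h2 : x - (2 * (j:ℝ) + 1) * L / (2 * z) ≤ L / (2 * z) := by linarith
  nlinarith [sq_nonneg (x - (2 * (j:ℝ) + 1) * L / (2 * z)), sq_nonneg y]
end

section
/- Let L > 0, W > 0, let z ≥ 1 be a natural number, and let ρ > 0. Suppose there exist points a₁,…,a_z ∈ ℝ on the centerline (i.e., disk centers (a_j, 0)) such that the rectangle [0, L] × [−W/2, W/2] ⊆ ⋃_{j=1}^{z} closedBall((a_j, 0), ρ). Then ρ ≥ √((W/2)² + (L/(2z))²). -/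
open Metric

/-!
On the top edge `y = W / 2` of the rectangle, a disk of radius `ρ` centred on the axis covers
a segment of length at most `2 √(ρ² - (W/2)²)`. These `z` segments cover `[0, L]`, so comparing
Lebesgue measures gives `L ≤ 2 z √(ρ² - (W/2)²)`, which rearranges to the bound.
-/

open MeasureTheory in
theorem Real.sub_le_sum_two_mul_of_Icc_subset_iUnion_closedBall {ι : Type*} [Fintype ι]
    {a b : ℝ} {c r : ι → ℝ} (hr : ∀ i, 0 ≤ r i)
    (h : Set.Icc a b ⊆ ⋃ i, closedBall (c i) (r i)) : b - a ≤ ∑ i, 2 * r i := by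
  have hvol : ENNReal.ofReal (b - a) ≤ ENNReal.ofReal (∑ i, 2 * r i) :=
    calc ENNReal.ofReal (b - a) = volume (Set.Icc a b) := (Real.volume_Icc).symm
      _ ≤ volume (⋃ i, closedBall (c i) (r i)) := measure_mono h
      _ ≤ ∑ i, volume (closedBall (c i) (r i)) := measure_iUnion_fintype_le _ _
      _ = ENNReal.ofReal (∑ i, 2 * r i) := by
        simp only [Real.volume_closedBall]
        exact (ENNReal.ofReal_sum_of_nonneg fun i _ => by linarith [hr i]).symm
  exact (ENNReal.ofReal_le_ofReal_iff (Finset.sum_nonneg fun i _ => by linarith [hr i])).mp hvol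

theorem EuclideanSpace.dist_le_sqrt_sq_sub_sq_of_mem_closedBall {x y c ρ : ℝ}
    (h : (WithLp.equiv 2 (Fin 2 → ℝ)).symm ![x, y] ∈
      closedBall ((WithLp.equiv 2 (Fin 2 → ℝ)).symm ![c, 0]) ρ) :
    dist x c ≤ √(ρ ^ 2 - y ^ 2) := by
  rw [mem_closedBall, EuclideanSpace.dist_eq, Real.sqrt_le_iff] at h
  simp only [Fin.sum_univ_two, WithLp.equiv_symm_apply, PiLp.toLp_apply, Matrix.cons_val_zero,
    Matrix.cons_val_one, Real.dist_eq, sq_abs, sub_zero] at h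
  rw [Real.dist_eq, ← Real.sqrt_sq_eq_abs]
  exact Real.sqrt_le_sqrt (by linarith [h.2])

/-- Minimality claim accompanying equation (9) of the paper: among all coverings
of the rectangle `[0, L] × [-W/2, W/2]` by `z` closed disks of a common radius
`ρ` whose centers lie on the centerline (the x-axis), the radius must satisfy
`ρ ≥ √((W/2)² + (L/(2z))²)`. -/
theorem rectangle_disk_coverage_min_radius
    (L W : ℝ) (hL : 0 < L) (hW : 0 < W) (z : ℕ) (hz : 1 ≤ z)
    (ρ : ℝ) (hρ : 0 < ρ) (a : Fin z → ℝ)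
    (hcover : {p : EuclideanSpace ℝ (Fin 2) |
        p 0 ∈ Set.Icc (0 : ℝ) L ∧ p 1 ∈ Set.Icc (-(W / 2)) (W / 2)} ⊆
      ⋃ j : Fin z,
        closedBall ((WithLp.equiv 2 (Fin 2 → ℝ)).symm ![a j, 0]) ρ) :
    ρ ≥ Real.sqrt ((W / 2) ^ 2 + (L / (2 * z)) ^ 2) := by
  have hz0 : (0 : ℝ) < z := by exact_mod_cast hz
  set r := √(ρ ^ 2 - (W / 2) ^ 2)
  have htop : Set.Icc 0 L ⊆ ⋃ j, closedBall (a j) r := by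
    intro x hx
    have hmem : (WithLp.equiv 2 (Fin 2 → ℝ)).symm ![x, W / 2] ∈ {p : EuclideanSpace ℝ (Fin 2) |
        p 0 ∈ Set.Icc (0 : ℝ) L ∧ p 1 ∈ Set.Icc (-(W / 2)) (W / 2)} := by
      simpa using ⟨hx, by linarith⟩
    obtain ⟨j, hj⟩ := Set.mem_iUnion.mp (hcover hmem)
    exact Set.mem_iUnion.mpr ⟨j, EuclideanSpace.dist_le_sqrt_sq_sub_sq_of_mem_closedBall hj⟩
  have hlen : L ≤ 2 * z * r := by
    have hsum := Real.sub_le_sum_two_mul_of_Icc_subset_iUnion_closedBall (fun _ => Real.sqrt_nonneg _) htop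
    simp only [Finset.sum_const, Finset.card_univ, Fintype.card_fin, nsmul_eq_mul, sub_zero] at hsum
    linarith
  have hLr : L / (2 * z) ≤ r := by
    rw [div_le_iff₀ (by positivity)]; linarith
  have hr_sq : r ^ 2 = ρ ^ 2 - (W / 2) ^ 2 :=
    Real.sq_sqrt (Real.sqrt_pos.mp (lt_of_lt_of_le (by positivity) hLr)).le
  rw [ge_iff_le, Real.sqrt_le_left hρ.le]
  linarith [pow_le_pow_left₀ (by positivity) hLr 2]
end
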